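/- Let N ∈ ℕ, n ∈ {3,…,N}, and Z = (z_{j,k}) ∈ ℂ^{N×n} with |z_{j,k}| ≤ 1 for all j, k. With z̃_k, a_{j,k}, β, G_3(Z) as defined, one has |G_3(Z)| ≤ √3 · ∑_{j=1}^N ((1/N²) ∑_{k=1}^n |a_{j,k}|² · min{n/3, 1/(1−β)})^{3/2}. -/

import Mathlib

open scoped BigOperators

/-- The permanent of a rectangular complex matrix `Z ∈ ℂ^{N×n}` (`n ≤ N`):
`per(Z) = ∑_{j ∈ [N]^n_≠} ∏_{k=1}^n z_{j_k,k}`, i.e. the sum over injective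
maps `Fin n → Fin N`. -/
noncomputable def rectPermanent {N n : ℕ} (Z : Matrix (Fin N) (Fin n) ℂ) : ℂ :=
  ∑ j ∈ Finset.univ.filter (fun j : Fin n → Fin N => Function.Injective j),
    ∏ k : Fin n, Z (j k) k

/-- `z̃_k = (1/N) ∑_{j=1}^N z_{j,k}`, the `k`-th column mean. -/
noncomputable def ztilde {N n : ℕ} (Z : Matrix (Fin N) (Fin n) ℂ) (k : Fin n) : ℂ :=
  (N : ℂ)⁻¹ * ∑ j : Fin N, Z j k

/-- `a_{j,k} = z_{j,k} − z̃_k`. -/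
noncomputable def aEnt {N n : ℕ} (Z : Matrix (Fin N) (Fin n) ℂ) (j : Fin N) (k : Fin n) : ℂ :=
  Z j k - ztilde Z k

/-- `G_m(Z) = ((N−m)!/((n−m)!·N!)) · [x_1⋯x_n]((∏_j (1+U_j(x)))·(∑_k z̃_k x_k)^{n−m})`,
where `U_j(x) = ∑_k a_{j,k} x_k` and `[x_1⋯x_n]` denotes the coefficient of the
monomial `x_1⋯x_n` (the `MvPolynomial` coefficient at exponent `∑ k, Finsupp.single k 1`). -/
noncomputable def GZ {N n : ℕ} (Z : Matrix (Fin N) (Fin n) ℂ) (m : ℕ) : ℂ :=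
  ((N - m).factorial : ℂ) / (((n - m).factorial : ℂ) * (N.factorial : ℂ)) *
    MvPolynomial.coeff (∑ k : Fin n, Finsupp.single k 1)
      ((∏ j : Fin N,
          (1 + ∑ k : Fin n, MvPolynomial.C (aEnt Z j k) * MvPolynomial.X k)) *
        (∑ k : Fin n, MvPolynomial.C (ztilde Z k) * MvPolynomial.X k) ^ (n - m))

/-- `H_ℓ(Z) = ∑_{m=0}^ℓ G_m(Z)`. -/
noncomputable def HZ {N n : ℕ} (Z : Matrix (Fin N) (Fin n) ℂ) (ℓ : ℕ) : ℂ :=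
  ∑ m ∈ Finset.range (ℓ + 1), GZ Z m

/-- `C_ℓ = (e^ℓ · ℓ! / ℓ^{ℓ+1/2})^{1/2}`. -/
noncomputable def Cconst (ℓ : ℕ) : ℝ :=
  Real.sqrt (Real.exp ℓ * ℓ.factorial / (ℓ : ℝ) ^ ((ℓ : ℝ) + 1 / 2))

/-- `α = (1/(nN)) ∑_{j=1}^N ∑_{k=1}^n |a_{j,k}|²`. -/
noncomputable def alphaZ {N n : ℕ} (Z : Matrix (Fin N) (Fin n) ℂ) : ℝ :=
  ((n : ℝ) * N)⁻¹ * ∑ j : Fin N, ∑ k : Fin n, ‖aEnt Z j k‖ ^ 2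

/-- `β = (1/n) ∑_{k=1}^n |z̃_k|²`. -/
noncomputable def betaZ {N n : ℕ} (Z : Matrix (Fin N) (Fin n) ℂ) : ℝ :=
  (n : ℝ)⁻¹ * ∑ k : Fin n, ‖ztilde Z k‖ ^ 2

/-- `γ(d) = (nα/N)·min{dn, 1/(1−β)}`; for `β = 1` the quantity `1/(1−β)` is `+∞`,
so the minimum is interpreted as `dn`. `γ = γ(1)`. -/
noncomputable def gammaZ {N n : ℕ} (Z : Matrix (Fin N) (Fin n) ℂ) (d : ℝ) : ℝ :=
  (n : ℝ) * alphaZ Z / N *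
    (if betaZ Z < 1 then min (d * n) (1 / (1 - betaZ Z)) else d * n)

/-!
Expanding the coefficient, the factor `(∑ z̃_k x_k)^{n-3}` chooses the set `A` of `n - 3`
columns it covers, and the remaining squarefree cubic monomial is read off `∏_j (1 + U_j)`.
Since every column of `a` sums to zero, that coefficient collapses to `2 ∑_j ∏_{k ∉ A} a_{j,k}`,
so `G_3(Z) = 2/(N(N-1)(N-2)) · ∑_j ∑_{|A| = n-3} ∏_{k ∈ A} z̃_k ∏_{k ∉ A} a_{j,k}`.
For a fixed row, Cauchy–Schwarz and Maclaurin's inequality `e_k ≤ C(n,k) (e_1/n)^k` bound the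
inner sum by `C(n,3) (β^{n-3} (∑_k |a_{j,k}|²/n)³)^{1/2}`, and the AM-GM type estimate
`n³ β^{n-3} (1-β)³ ≤ 27` (from `t ≤ e^{t-1}`) replaces `n³ β^{n-3}` by
`27 min{n/3, 1/(1-β)}³`. What is left is `n(n-1)(n-2)/n³ ≤ N(N-1)(N-2)/N³`, as
`m(m-1)(m-2)/m³` increases with `m`.
-/

open Finset

section PowersetCard

variable {α M : Type*} [AddCommMonoid M]

theorem sum_powersetCard_sum_mem_const (s : Finset α) (k : ℕ) (f : Finset α → M) :
    ∑ t ∈ s.powersetCard k, ∑ _i ∈ t, f t = k • ∑ t ∈ s.powersetCard k, f t := by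
  rw [smul_sum]
  exact sum_congr rfl fun t ht => by rw [sum_const, (mem_powersetCard.1 ht).2]

variable [DecidableEq α]

theorem sum_powersetCard_succ_sum_mem (s : Finset α) (k : ℕ) (f : Finset α → α → M) :
    ∑ t ∈ s.powersetCard (k + 1), ∑ i ∈ t, f t i
      = ∑ t ∈ s.powersetCard k, ∑ i ∈ s \ t, f (insert i t) i := by
  rw [sum_sigma', sum_sigma']
  refine sum_nbij' (fun p => ⟨p.1.erase p.2, p.2⟩) (fun p => ⟨insert p.2 p.1, p.2⟩)
    ?_ ?_ ?_ ?_ ?_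
  · rintro ⟨t, i⟩ hp
    simp only [mem_sigma, mem_powersetCard] at hp ⊢
    obtain ⟨⟨hts, hcard⟩, hi⟩ := hp
    exact ⟨⟨(erase_subset _ _).trans hts, by rw [card_erase_of_mem hi, hcard]; rfl⟩,
      mem_sdiff.2 ⟨hts hi, notMem_erase _ _⟩⟩
  · rintro ⟨t, i⟩ hp
    simp only [mem_sigma, mem_powersetCard, mem_sdiff] at hp ⊢
    obtain ⟨⟨hts, hcard⟩, his, hit⟩ := hp
    exact ⟨⟨insert_subset his hts, by rw [card_insert_of_notMem hit, hcard]⟩, mem_insert_self _ _⟩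
  · rintro ⟨t, i⟩ hp
    simp [insert_erase (mem_sigma.1 hp).2]
  · rintro ⟨t, i⟩ hp
    simp [erase_insert (mem_sdiff.1 (mem_sigma.1 hp).2).2]
  · rintro ⟨t, i⟩ hp
    simp [insert_erase (mem_sigma.1 hp).2]

theorem sum_sum_powersetCard_erase (s : Finset α) (k : ℕ) (f : α → Finset α → M) :
    ∑ i ∈ s, ∑ t ∈ (s.erase i).powersetCard k, f i t
      = ∑ t ∈ s.powersetCard k, ∑ i ∈ s \ t, f i t :=
  sum_comm' fun i t => by
    simp only [mem_powersetCard, mem_sdiff, subset_erase]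
    tauto

theorem sum_powersetCard_sdiff (s : Finset α) {k : ℕ} (hk : k ≤ #s) (f : Finset α → M) :
    ∑ t ∈ s.powersetCard k, f (s \ t) = ∑ t ∈ s.powersetCard (#s - k), f t := by
  refine sum_nbij' (s \ ·) (s \ ·) ?_ ?_ ?_ ?_ (fun _ _ => rfl)
  · intro t ht
    obtain ⟨hts, hcard⟩ := mem_powersetCard.1 ht
    exact mem_powersetCard.2 ⟨sdiff_subset, by rw [card_sdiff_of_subset hts, hcard]⟩
  · intro t ht
    obtain ⟨hts, hcard⟩ := mem_powersetCard.1 ht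
    exact mem_powersetCard.2 ⟨sdiff_subset, by rw [card_sdiff_of_subset hts, hcard]; omega⟩
  · exact fun t ht => Finset.sdiff_sdiff_eq_self (mem_powersetCard.1 ht).1
  · exact fun t ht => Finset.sdiff_sdiff_eq_self (mem_powersetCard.1 ht).1

end PowersetCard

section Maclaurin

variable {σ : Type*} [Fintype σ] [DecidableEq σ]

theorem sum_mul_sum_powersetCard_prod {R : Type*} [CommSemiring R] (x : σ → R) (k : ℕ) :
    (∑ i, x i) * ∑ t ∈ univ.powersetCard k, ∏ i ∈ t, x i
      = (k + 1) * ∑ t ∈ univ.powersetCard (k + 1), ∏ i ∈ t, x i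
        + ∑ t ∈ univ.powersetCard k, (∏ i ∈ t, x i) * ∑ i ∈ t, x i := by
  have hcount : (k + 1 : R) * ∑ t ∈ univ.powersetCard (k + 1), ∏ i ∈ t, x i
      = ∑ t ∈ univ.powersetCard (k + 1), ∑ _i ∈ t, ∏ i ∈ t, x i := by
    rw [sum_powersetCard_sum_mem_const, nsmul_eq_mul]
    push_cast; rfl
  rw [hcount, sum_powersetCard_succ_sum_mem, mul_sum, ← sum_add_distrib]
  refine sum_congr rfl fun t _ => ?_
  rw [← sum_sdiff (subset_univ t), add_mul, sum_mul, mul_comm (∑ i ∈ t, x i)]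
  congr 1
  exact sum_congr rfl fun i hi => (prod_insert (mem_sdiff.1 hi).2).symm

theorem sum_mul_sum_sub_nonneg {ι : Type*} (B : Finset ι) (x : ι → ℝ) :
    0 ≤ ∑ j ∈ B, x j * ∑ i ∈ B, (x j - x i) := by
  have h : ∑ j ∈ B, x j * ∑ i ∈ B, (x j - x i) = #B * ∑ j ∈ B, x j ^ 2 - (∑ j ∈ B, x j) ^ 2 := by
    simp only [mul_sum, mul_sub, sum_sub_distrib, sum_const, nsmul_eq_mul]
    rw [sq, sum_mul_sum]
    congr 1
    exact sum_congr rfl fun i _ => by ring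
  rw [h, sub_nonneg]
  exact sq_sum_le_card_mul_sum_sq

variable (x : σ → ℝ)

theorem mul_sum_mul_sum_powersetCard_prod_le (hx : ∀ i, 0 ≤ x i) (k : ℕ) :
    k * (∑ i, x i) * ∑ t ∈ univ.powersetCard k, ∏ i ∈ t, x i
      ≤ Fintype.card σ * ∑ t ∈ univ.powersetCard k, (∏ i ∈ t, x i) * ∑ i ∈ t, x i := by
  have hsplit : (Fintype.card σ : ℝ) * ∑ t ∈ univ.powersetCard k, (∏ i ∈ t, x i) * ∑ i ∈ t, x i
        - k * (∑ i, x i) * ∑ t ∈ univ.powersetCard k, ∏ i ∈ t, x i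
      = ∑ t ∈ univ.powersetCard k, ∑ j ∈ t, (∏ i ∈ t, x i) * ∑ i ∈ univ \ t, (x j - x i) := by
    rw [mul_sum, mul_sum, ← sum_sub_distrib]
    refine sum_congr rfl fun t ht => ?_
    rw [← mul_sum, sum_comm' (t' := univ \ t) (s' := fun _ => t) (fun _ _ => Iff.rfl)]
    simp only [sum_sub_distrib, sum_const, card_sdiff_of_subset (subset_univ t),
      (mem_powersetCard.1 ht).2, card_univ, nsmul_eq_mul, ← sum_sdiff (subset_univ t)]
    rw [← mul_sum, Nat.cast_sub ((mem_powersetCard.1 ht).2 ▸ card_le_univ t)]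
    ring
  rw [← sub_nonneg, hsplit]
  rcases k with _ | m
  · simp
  -- Writing `t = insert j A`, the term `i = j` of the inner sum vanishes, so each `A` contributes
  -- `∏_A x · ∑_{j, i ∉ A} x_j (x_j - x_i) ≥ 0`.
  rw [sum_powersetCard_succ_sum_mem]
  refine sum_nonneg fun A _ => ?_
  have hterm : ∀ j ∈ univ \ A, (∏ i ∈ insert j A, x i) * ∑ i ∈ univ \ insert j A, (x j - x i)
      = (∏ i ∈ A, x i) * (x j * ∑ i ∈ univ \ A, (x j - x i)) := by
    intro j hj
    have hjA := (mem_sdiff.1 hj).2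
    rw [prod_insert hjA, sdiff_insert, sum_erase _ (sub_self _)]
    ring
  rw [sum_congr rfl hterm, ← mul_sum]
  exact mul_nonneg (prod_nonneg fun i _ => hx i) (sum_mul_sum_sub_nonneg _ x)

theorem succ_mul_sum_powersetCard_prod_mul_card_le (hx : ∀ i, 0 ≤ x i) (k : ℕ) :
    (k + 1) * (∑ t ∈ univ.powersetCard (k + 1), ∏ i ∈ t, x i) * Fintype.card σ
      ≤ (Fintype.card σ - k) * ((∑ i, x i) * ∑ t ∈ univ.powersetCard k, ∏ i ∈ t, x i) := by
  have hrec := sum_mul_sum_powersetCard_prod x k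
  have hcheb := mul_sum_mul_sum_powersetCard_prod_le x hx k
  nlinarith

theorem sum_powersetCard_prod_mul_card_pow_le (hx : ∀ i, 0 ≤ x i) (k : ℕ) :
    (∑ t ∈ univ.powersetCard k, ∏ i ∈ t, x i) * Fintype.card σ ^ k
      ≤ (Fintype.card σ).choose k * (∑ i, x i) ^ k := by
  set n := Fintype.card σ
  have hs : 0 ≤ ∑ i, x i := sum_nonneg fun i _ => hx i
  induction k with
  | zero => simp
  | succ k ih =>
    rcases lt_or_ge n (k + 1) with hnk | hkn
    · rw [powersetCard_eq_empty.2 (by simpa using hnk), Nat.choose_eq_zero_of_lt hnk]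
      simp
    have hchoose : (n.choose (k + 1) : ℝ) * (k + 1) = n.choose k * (n - k) := by
      rw [← Nat.cast_sub (Nat.le_of_succ_le hkn)]
      exact_mod_cast Nat.choose_succ_right_eq n k
    have hgap : (0 : ℝ) ≤ n - k := by
      rw [sub_nonneg]; exact_mod_cast Nat.le_of_succ_le hkn
    refine le_of_mul_le_mul_right ?_ (by positivity : (0 : ℝ) < k + 1)
    calc (∑ t ∈ univ.powersetCard (k + 1), ∏ i ∈ t, x i) * n ^ (k + 1) * (k + 1)
        = (k + 1) * (∑ t ∈ univ.powersetCard (k + 1), ∏ i ∈ t, x i) * n * n ^ k := by ring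
      _ ≤ (n - k) * ((∑ i, x i) * ∑ t ∈ univ.powersetCard k, ∏ i ∈ t, x i) * n ^ k :=
        mul_le_mul_of_nonneg_right
          (succ_mul_sum_powersetCard_prod_mul_card_le x hx k) (by positivity)
      _ = (n - k) * (∑ i, x i) * ((∑ t ∈ univ.powersetCard k, ∏ i ∈ t, x i) * n ^ k) := by ring
      _ ≤ (n - k) * (∑ i, x i) * (n.choose k * (∑ i, x i) ^ k) := by gcongr
      _ = n.choose (k + 1) * (∑ i, x i) ^ (k + 1) * (k + 1) := by
        rw [mul_right_comm _ _ ((k : ℝ) + 1), hchoose]; ring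

end Maclaurin

theorem norm_sum_powersetCard_prod_mul_prod_compl_sq_le {σ : Type*} [Fintype σ] [DecidableEq σ]
    (x y : σ → ℂ) {k : ℕ} (hk : k ≤ Fintype.card σ) :
    ‖∑ A ∈ univ.powersetCard k, (∏ i ∈ A, x i) * ∏ i ∈ univ \ A, y i‖ ^ 2
        * Fintype.card σ ^ k * Fintype.card σ ^ (Fintype.card σ - k)
      ≤ (Fintype.card σ).choose k ^ 2 * (∑ i, ‖x i‖ ^ 2) ^ k
        * (∑ i, ‖y i‖ ^ 2) ^ (Fintype.card σ - k) := by
  set n := Fintype.card σ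
  have hcompl := sum_powersetCard_sdiff univ (by simpa using hk) fun B => ∏ i ∈ B, ‖y i‖ ^ 2
  rw [card_univ] at hcompl
  have hCS : ‖∑ A ∈ univ.powersetCard k, (∏ i ∈ A, x i) * ∏ i ∈ univ \ A, y i‖ ^ 2
      ≤ (∑ A ∈ univ.powersetCard k, ∏ i ∈ A, ‖x i‖ ^ 2)
        * ∑ B ∈ univ.powersetCard (n - k), ∏ i ∈ B, ‖y i‖ ^ 2 := by
    rw [← hcompl]
    calc _ ≤ (∑ A ∈ univ.powersetCard k, (∏ i ∈ A, ‖x i‖) * ∏ i ∈ univ \ A, ‖y i‖) ^ 2 := by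
          gcongr
          refine (norm_sum_le _ _).trans_eq (sum_congr rfl fun A _ => ?_)
          rw [norm_mul, norm_prod, norm_prod]
      _ ≤ _ := by
          simpa only [prod_pow] using sum_mul_sq_le_sq_mul_sq _ _ _
  have hx := sum_powersetCard_prod_mul_card_pow_le (fun i => ‖x i‖ ^ 2) (fun _ => by positivity) k
  have hy := sum_powersetCard_prod_mul_card_pow_le (fun i => ‖y i‖ ^ 2) (fun _ => by positivity)
    (n - k)
  rw [Nat.choose_symm hk] at hy
  calc _ ≤ (∑ A ∈ univ.powersetCard k, ∏ i ∈ A, ‖x i‖ ^ 2)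
          * (∑ B ∈ univ.powersetCard (n - k), ∏ i ∈ B, ‖y i‖ ^ 2) * n ^ k * n ^ (n - k) := by
        gcongr
    _ = ((∑ A ∈ univ.powersetCard k, ∏ i ∈ A, ‖x i‖ ^ 2) * n ^ k)
          * ((∑ B ∈ univ.powersetCard (n - k), ∏ i ∈ B, ‖y i‖ ^ 2) * n ^ (n - k)) := by ring
    _ ≤ (n.choose k * (∑ i, ‖x i‖ ^ 2) ^ k) * (n.choose k * (∑ i, ‖y i‖ ^ 2) ^ (n - k)) :=
        mul_le_mul hx hy (by positivity) (by positivity)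
    _ = _ := by ring

open MvPolynomial

section SquarefreeCoeff

variable {σ : Type*} [DecidableEq σ]

noncomputable def sqfreeExp (K : Finset σ) : σ →₀ ℕ := ∑ k ∈ K, Finsupp.single k 1

theorem mem_support_sqfreeExp {K : Finset σ} {k : σ} : k ∈ (sqfreeExp K).support ↔ k ∈ K := by
  simp [sqfreeExp, Finsupp.finsetSum_apply, Finsupp.single_apply]

theorem sqfreeExp_sub_single {K : Finset σ} {k : σ} (hk : k ∈ K) :
    sqfreeExp K - Finsupp.single k 1 = sqfreeExp (K.erase k) := by
  rw [sqfreeExp, ← add_sum_erase _ _ hk, add_tsub_cancel_left, sqfreeExp]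

theorem sqfreeExp_ne_zero {K : Finset σ} (hK : K.Nonempty) : sqfreeExp K ≠ 0 := fun h => by
  obtain ⟨k, hk⟩ := hK
  simpa [h] using mem_support_sqfreeExp.2 hk

variable [Fintype σ] {R : Type*} [CommSemiring R]

theorem coeff_sqfreeExp_mul_linear (K : Finset σ) (L : σ → R) (q : MvPolynomial σ R) :
    coeff (sqfreeExp K) (q * ∑ k, C (L k) * X k)
      = ∑ k ∈ K, L k * coeff (sqfreeExp (K.erase k)) q := by
  simp only [mul_sum, coeff_sum, mul_left_comm q, coeff_C_mul, coeff_mul_X', mem_support_sqfreeExp,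
    mul_ite, mul_zero]
  rw [sum_ite_mem, univ_inter]
  refine sum_congr rfl fun k hk => ?_
  rw [sqfreeExp_sub_single hk]

theorem coeff_sqfreeExp_mul_linear_pow (K : Finset σ) (w : σ → R) (q : MvPolynomial σ R)
    (m : ℕ) :
    coeff (sqfreeExp K) (q * (∑ k, C (w k) * X k) ^ m)
      = m.factorial * ∑ A ∈ K.powersetCard m, (∏ k ∈ A, w k) * coeff (sqfreeExp (K \ A)) q := by
  induction m generalizing K with
  | zero => simp
  | succ m ih =>
    have hinsert : ∀ A ∈ K.powersetCard m, ∀ j ∈ K \ A,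
        (∏ i ∈ insert j A, w i) * coeff (sqfreeExp (K \ insert j A)) q
          = w j * ((∏ i ∈ A, w i) * coeff (sqfreeExp (K.erase j \ A)) q) := by
      intro A _ j hj
      rw [prod_insert (mem_sdiff.1 hj).2, sdiff_insert, erase_sdiff_comm, mul_assoc]
    rw [pow_succ, ← mul_assoc, coeff_sqfreeExp_mul_linear]
    calc ∑ k ∈ K, w k * coeff (sqfreeExp (K.erase k)) (q * (∑ k, C (w k) * X k) ^ m)
        = m.factorial * ∑ A ∈ K.powersetCard m, ∑ j ∈ K \ A,
            (∏ i ∈ insert j A, w i) * coeff (sqfreeExp (K \ insert j A)) q := by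
          simp only [ih, mul_sum, mul_left_comm _ (m.factorial : R)]
          rw [sum_sum_powersetCard_erase]
          exact sum_congr rfl fun A hA => sum_congr rfl fun j hj => by rw [hinsert A hA j hj]
      _ = (m + 1).factorial * ∑ B ∈ K.powersetCard (m + 1),
            (∏ i ∈ B, w i) * coeff (sqfreeExp (K \ B)) q := by
          rw [← sum_powersetCard_succ_sum_mem K m
              fun B _ => (∏ i ∈ B, w i) * coeff (sqfreeExp (K \ B)) q,
            sum_powersetCard_sum_mem_const, nsmul_eq_mul, Nat.factorial_succ]
          push_cast; ring

end SquarefreeCoeff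

section AffineProd

variable {ι σ R : Type*} [DecidableEq ι] [DecidableEq σ] [Fintype σ] [CommRing R]

noncomputable def affineProd (a : ι → σ → R) (s : Finset ι) : MvPolynomial σ R :=
  ∏ j ∈ s, (1 + ∑ k, C (a j k) * X k)

variable (a : ι → σ → R)

theorem coeff_sqfreeExp_affineProd_insert {s : Finset ι} {j : ι} (hj : j ∉ s) (K : Finset σ) :
    coeff (sqfreeExp K) (affineProd a (insert j s))
      = coeff (sqfreeExp K) (affineProd a s)
        + ∑ k ∈ K, a j k * coeff (sqfreeExp (K.erase k)) (affineProd a s) := by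
  rw [affineProd, prod_insert hj, mul_comm, ← affineProd, mul_add, mul_one, coeff_add,
    coeff_sqfreeExp_mul_linear]

theorem coeff_sqfreeExp_empty_affineProd (s : Finset ι) :
    coeff (sqfreeExp (∅ : Finset σ)) (affineProd a s) = 1 := by
  induction s using Finset.induction with
  | empty => simp [affineProd, sqfreeExp]
  | insert j s hj ih => rw [coeff_sqfreeExp_affineProd_insert a hj, ih, sum_empty, add_zero]

theorem coeff_sqfreeExp_singleton_affineProd (s : Finset ι) (k₁ : σ) :
    coeff (sqfreeExp {k₁}) (affineProd a s) = ∑ j ∈ s, a j k₁ := by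
  induction s using Finset.induction with
  | empty => simp [affineProd, coeff_one, (sqfreeExp_ne_zero (singleton_nonempty k₁)).symm]
  | insert j s hj ih =>
    rw [coeff_sqfreeExp_affineProd_insert a hj, ih, sum_singleton, erase_singleton,
      coeff_sqfreeExp_empty_affineProd, sum_insert hj]
    ring

theorem coeff_sqfreeExp_pair_affineProd (s : Finset ι) {k₁ k₂ : σ} (h12 : k₁ ≠ k₂) :
    coeff (sqfreeExp {k₁, k₂}) (affineProd a s)
      = (∑ j ∈ s, a j k₁) * (∑ j ∈ s, a j k₂) - ∑ j ∈ s, a j k₁ * a j k₂ := by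
  induction s using Finset.induction with
  | empty => simp [affineProd, coeff_one, (sqfreeExp_ne_zero (insert_nonempty k₁ {k₂})).symm]
  | insert j s hj ih =>
    rw [coeff_sqfreeExp_affineProd_insert a hj, ih, sum_pair h12,
      erase_insert (by simpa using h12), erase_insert_of_ne h12, erase_singleton, insert_empty,
      coeff_sqfreeExp_singleton_affineProd, coeff_sqfreeExp_singleton_affineProd]
    simp only [sum_insert hj]
    ring

theorem coeff_sqfreeExp_triple_affineProd (s : Finset ι) {k₁ k₂ k₃ : σ}
    (h12 : k₁ ≠ k₂) (h13 : k₁ ≠ k₃) (h23 : k₂ ≠ k₃) :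
    coeff (sqfreeExp {k₁, k₂, k₃}) (affineProd a s)
      = (∑ j ∈ s, a j k₁) * (∑ j ∈ s, a j k₂) * (∑ j ∈ s, a j k₃)
        - (∑ j ∈ s, a j k₁ * a j k₂) * (∑ j ∈ s, a j k₃)
        - (∑ j ∈ s, a j k₁ * a j k₃) * (∑ j ∈ s, a j k₂)
        - (∑ j ∈ s, a j k₂ * a j k₃) * (∑ j ∈ s, a j k₁)
        + 2 * ∑ j ∈ s, a j k₁ * a j k₂ * a j k₃ := by
  induction s using Finset.induction with
  | empty => simp [affineProd, coeff_one, (sqfreeExp_ne_zero (insert_nonempty k₁ {k₂, k₃})).symm]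
  | insert j s hj ih =>
    have h1 : ({k₁, k₂, k₃} : Finset σ).erase k₁ = {k₂, k₃} := erase_insert (by simp [h12, h13])
    have h2 : ({k₁, k₂, k₃} : Finset σ).erase k₂ = {k₁, k₃} := by
      rw [erase_insert_of_ne h12, erase_insert (by simpa using h23)]
    have h3 : ({k₁, k₂, k₃} : Finset σ).erase k₃ = {k₁, k₂} := by
      rw [erase_insert_of_ne h13, erase_insert_of_ne h23, erase_singleton, insert_empty]
    rw [coeff_sqfreeExp_affineProd_insert a hj, ih, sum_insert (by simp [h12, h13]), sum_pair h23,
      h1, h2, h3, coeff_sqfreeExp_pair_affineProd a s h23, coeff_sqfreeExp_pair_affineProd a s h13,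
      coeff_sqfreeExp_pair_affineProd a s h12]
    simp only [sum_insert hj]
    ring

theorem coeff_sqfreeExp_affineProd_of_card_eq_three {s : Finset ι}
    (hcol : ∀ k, ∑ j ∈ s, a j k = 0) {T : Finset σ} (hT : #T = 3) :
    coeff (sqfreeExp T) (affineProd a s) = 2 * ∑ j ∈ s, ∏ k ∈ T, a j k := by
  obtain ⟨k₁, k₂, k₃, h12, h13, h23, rfl⟩ := card_eq_three.1 hT
  rw [coeff_sqfreeExp_triple_affineProd a s h12 h13 h23, hcol, hcol, hcol]
  simp only [prod_insert (show k₁ ∉ ({k₂, k₃} : Finset σ) by simp [h12, h13]),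
    prod_pair h23, mul_assoc]
  ring

end AffineProd

section Estimates

theorem pow_le_pow_mul_exp_sub {x : ℝ} (hx : 0 ≤ x) (m : ℕ) :
    x ^ m ≤ m ^ m * Real.exp (x - m) := by
  rcases m.eq_zero_or_pos with rfl | hm
  · simpa using Real.one_le_exp hx
  have hm' : (0 : ℝ) < m := by exact_mod_cast hm
  calc x ^ m = m ^ m * (x / m) ^ m := by rw [div_pow, mul_div_cancel₀ _ (by positivity)]
    _ ≤ m ^ m * Real.exp (x / m - 1) ^ m := by
        gcongr
        linarith [Real.add_one_le_exp (x / m - 1)]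
    _ = m ^ m * Real.exp (x - m) := by
        rw [← Real.exp_nat_mul]
        congr 2
        field_simp

theorem cube_mul_pow_mul_one_sub_cube_le {n : ℕ} (hn : 3 ≤ n) {b : ℝ} (hb0 : 0 ≤ b) (hb1 : b ≤ 1) :
    (n : ℝ) ^ 3 * b ^ (n - 3) * (1 - b) ^ 3 ≤ 27 := by
  set m := n - 3
  have hnm : (n : ℝ) = m + 3 := by simp only [m]; push_cast [Nat.cast_sub hn]; ring
  have h1 := pow_le_pow_mul_exp_sub (by positivity : (0 : ℝ) ≤ n * b) m
  have h2 := pow_le_pow_mul_exp_sub (by nlinarith : (0 : ℝ) ≤ n * (1 - b)) 3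
  have hprod : (n * b) ^ m * (n * (1 - b)) ^ 3 ≤ m ^ m * 27 := by
    calc _ ≤ (m ^ m * Real.exp (n * b - m)) * ((3 : ℕ) ^ 3 * Real.exp (n * (1 - b) - (3 : ℕ))) :=
          mul_le_mul h1 h2 (by positivity) (by positivity)
      _ = m ^ m * 27 := by
          have hexp : n * b - m + (n * (1 - b) - 3) = 0 := by rw [hnm]; ring
          rw [mul_mul_mul_comm, ← Real.exp_add]
          push_cast
          rw [hexp, Real.exp_zero]
          ring
  have hmn : (m : ℝ) ^ m ≤ (n : ℝ) ^ m := by gcongr; exact Nat.sub_le n 3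
  refine le_of_mul_le_mul_left ?_ (by positivity : (0 : ℝ) < (n : ℝ) ^ m)
  calc (n : ℝ) ^ m * ((n : ℝ) ^ 3 * b ^ m * (1 - b) ^ 3) = (n * b) ^ m * (n * (1 - b)) ^ 3 := by
        ring
    _ ≤ (n : ℝ) ^ m * 27 := hprod.trans (by gcongr)

noncomputable def minFactor (n : ℕ) (b : ℝ) : ℝ :=
  if b < 1 then min ((n : ℝ) / 3) (1 / (1 - b)) else (n : ℝ) / 3

theorem minFactor_nonneg (n : ℕ) (b : ℝ) : 0 ≤ minFactor n b := by
  unfold minFactor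
  split_ifs
  · have : 0 < 1 - b := by linarith
    positivity
  · positivity

theorem pow_mul_cube_le_minFactor_cube {n : ℕ} (hn : 3 ≤ n) {b : ℝ} (hb0 : 0 ≤ b)
    (hb1 : b ≤ 1) : b ^ (n - 3) * n ^ 3 ≤ 27 * minFactor n b ^ 3 := by
  have hthird : b ^ (n - 3) * n ^ 3 ≤ 27 * ((n : ℝ) / 3) ^ 3 := by
    have := pow_le_one₀ hb0 hb1 (n := n - 3)
    have : (27 : ℝ) * ((n : ℝ) / 3) ^ 3 = n ^ 3 := by ring
    nlinarith [pow_nonneg (Nat.cast_nonneg n : (0 : ℝ) ≤ n) 3]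
  unfold minFactor
  split_ifs
  · rcases min_cases ((n : ℝ) / 3) (1 / (1 - b)) with ⟨h, _⟩ | ⟨h, _⟩ <;> rw [h]
    · exact hthird
    · have hgap : 0 < 1 - b := by linarith
      rw [div_pow, one_pow, ← div_eq_mul_one_div, le_div_iff₀ (by positivity)]
      linarith [cube_mul_pow_mul_one_sub_cube_le hn hb0 hb1]
  · exact hthird

theorem monotone_descFactorial_div_pow (k : ℕ) :
    Monotone fun m : ℕ => (m.descFactorial k : ℝ) / m ^ k := by
  intro n N hnN
  induction k with
  | zero => simp
  | succ k ih =>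
    have hfactor : ((n - k : ℕ) : ℝ) / n ≤ ((N - k : ℕ) : ℝ) / N := by
      rcases lt_or_ge n k with hk | hk
      · rw [Nat.sub_eq_zero_of_le hk.le, Nat.cast_zero, zero_div]
        positivity
      rcases n.eq_zero_or_pos with rfl | hn
      · simp only [Nat.cast_zero, div_zero]; positivity
      have hN : (0 : ℝ) < N := by exact_mod_cast hn.trans_le hnN
      rw [Nat.cast_sub hk, Nat.cast_sub (hk.trans hnN), sub_div, sub_div,
        div_self (by positivity), div_self hN.ne']
      gcongr
    simp only [Nat.descFactorial_succ, pow_succ', Nat.cast_mul, mul_div_mul_comm]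
    exact mul_le_mul hfactor ih (by positivity) (by positivity)

end Estimates

section ThirdTerm

variable {N n : ℕ} (Z : Matrix (Fin N) (Fin n) ℂ)

noncomputable def rowSum (j : Fin N) : ℂ :=
  ∑ A ∈ univ.powersetCard (n - 3), (∏ k ∈ A, ztilde Z k) * ∏ k ∈ univ \ A, aEnt Z j k

theorem sum_aEnt_eq_zero (k : Fin n) : ∑ j, aEnt Z j k = 0 := by
  rcases N.eq_zero_or_pos with rfl | hN
  · simp
  simp only [aEnt, ztilde, sum_sub_distrib, sum_const, card_univ, Fintype.card_fin, nsmul_eq_mul]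
  rw [mul_inv_cancel_left₀ (by exact_mod_cast hN.ne'), sub_self]

theorem GZ_three_eq (hn3 : 3 ≤ n) (hN3 : 3 ≤ N) :
    GZ Z 3 = 2 / N.descFactorial 3 * ∑ j, rowSum Z j := by
  have hcompl : ∀ A ∈ (univ : Finset (Fin n)).powersetCard (n - 3), #(univ \ A) = 3 := by
    intro A hA
    rw [card_sdiff_of_subset (subset_univ A), (mem_powersetCard.1 hA).2, card_univ,
      Fintype.card_fin]
    omega
  have hfac : (N.factorial : ℂ) = (N - 3).factorial * N.descFactorial 3 := by
    exact_mod_cast (Nat.factorial_mul_descFactorial hN3).symm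
  have : ((n - 3).factorial : ℂ) ≠ 0 := Nat.cast_ne_zero.2 (Nat.factorial_ne_zero _)
  have : ((N - 3).factorial : ℂ) ≠ 0 := Nat.cast_ne_zero.2 (Nat.factorial_ne_zero _)
  rw [GZ, show (∑ k : Fin n, Finsupp.single k 1) = sqfreeExp univ from rfl,
    show ∏ j : Fin N, (1 + ∑ k : Fin n, C (aEnt Z j k) * X k) = affineProd (aEnt Z) univ from rfl,
    coeff_sqfreeExp_mul_linear_pow]
  simp only [rowSum, sum_comm (s := univ), mul_sum]
  refine sum_congr rfl fun A hA => ?_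
  rw [coeff_sqfreeExp_affineProd_of_card_eq_three _ (sum_aEnt_eq_zero Z) (hcompl A hA), hfac,
    mul_sum, mul_sum]
  field_simp
  rw [sum_div]

theorem norm_ztilde_le_one (hZ : ∀ j k, ‖Z j k‖ ≤ 1) (k : Fin n) : ‖ztilde Z k‖ ≤ 1 := by
  rw [ztilde, norm_mul, norm_inv, Complex.norm_natCast]
  refine inv_mul_le_one_of_le₀ ((norm_sum_le _ _).trans ?_) (Nat.cast_nonneg N)
  simpa using sum_le_sum fun j (_ : j ∈ univ) => hZ j k

theorem betaZ_nonneg : 0 ≤ betaZ Z := by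
  unfold betaZ; positivity

theorem betaZ_le_one (hZ : ∀ j k, ‖Z j k‖ ≤ 1) : betaZ Z ≤ 1 := by
  refine inv_mul_le_one_of_le₀ ?_ (Nat.cast_nonneg n)
  simpa using sum_le_sum fun k (_ : k ∈ univ) =>
    pow_le_one₀ (norm_nonneg _) (norm_ztilde_le_one Z hZ k) (n := 2)

theorem sum_norm_ztilde_sq (hn : n ≠ 0) : ∑ k, ‖ztilde Z k‖ ^ 2 = n * betaZ Z := by
  rw [betaZ, mul_inv_cancel_left₀ (by exact_mod_cast hn)]

theorem norm_rowSum_sq_mul_le (hn3 : 3 ≤ n) (hZ : ∀ j k, ‖Z j k‖ ≤ 1) (j : Fin N) :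
    ‖rowSum Z j‖ ^ 2 * n ^ 6
      ≤ 27 * n.choose 3 ^ 2 * ((∑ k, ‖aEnt Z j k‖ ^ 2) * minFactor n (betaZ Z)) ^ 3 := by
  set S := ∑ k, ‖aEnt Z j k‖ ^ 2
  set b := betaZ Z
  have hCS : ‖rowSum Z j‖ ^ 2 * n ^ (n - 3) * n ^ 3
      ≤ n.choose 3 ^ 2 * (n * b) ^ (n - 3) * S ^ 3 := by
    simpa only [rowSum, Fintype.card_fin, Nat.sub_sub_self hn3, Nat.choose_symm hn3,
      sum_norm_ztilde_sq Z (by omega : n ≠ 0)] using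
      norm_sum_powersetCard_prod_mul_prod_compl_sq_le (ztilde Z) (aEnt Z j) (k := n - 3) (by simp)
  have hrow : ‖rowSum Z j‖ ^ 2 * n ^ 3 ≤ n.choose 3 ^ 2 * b ^ (n - 3) * S ^ 3 := by
    refine le_of_mul_le_mul_left ?_ (by positivity : (0 : ℝ) < n ^ (n - 3))
    calc _ = ‖rowSum Z j‖ ^ 2 * n ^ (n - 3) * n ^ 3 := by ring
      _ ≤ _ := hCS
      _ = _ := by ring
  have hb := pow_mul_cube_le_minFactor_cube hn3 (betaZ_nonneg Z) (betaZ_le_one Z hZ)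
  calc ‖rowSum Z j‖ ^ 2 * n ^ 6 = (‖rowSum Z j‖ ^ 2 * n ^ 3) * n ^ 3 := by ring
    _ ≤ (n.choose 3 ^ 2 * b ^ (n - 3) * S ^ 3) * n ^ 3 := by gcongr
    _ = n.choose 3 ^ 2 * S ^ 3 * (b ^ (n - 3) * n ^ 3) := by ring
    _ ≤ n.choose 3 ^ 2 * S ^ 3 * (27 * minFactor n b ^ 3) := by gcongr
    _ = _ := by ring

theorem two_div_descFactorial_mul_norm_rowSum_le (hn3 : 3 ≤ n) (hnN : n ≤ N)
    (hZ : ∀ j k, ‖Z j k‖ ≤ 1) (j : Fin N) :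
    2 / N.descFactorial 3 * ‖rowSum Z j‖
      ≤ √3 * ((N ^ 2 : ℝ)⁻¹ * (∑ k, ‖aEnt Z j k‖ ^ 2) * minFactor n (betaZ Z)) ^ ((3 : ℝ) / 2) := by
  set S := ∑ k, ‖aEnt Z j k‖ ^ 2
  set μ := minFactor n (betaZ Z)
  set D : ℝ := (N.descFactorial 3 : ℝ)
  have hn : (0 : ℝ) < n := by exact_mod_cast (by omega : 0 < n)
  have hN : (0 : ℝ) < N := by exact_mod_cast (by omega : 0 < N)
  have hD : 0 < D := Nat.cast_pos.2 (Nat.descFactorial_pos.2 (by omega))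
  have hμ : 0 ≤ μ := minFactor_nonneg n (betaZ Z)
  have hy : 0 ≤ (N ^ 2 : ℝ)⁻¹ * S * μ := by positivity
  have hrow : ‖rowSum Z j‖ ^ 2 ≤ 27 * n.choose 3 ^ 2 * (S * μ) ^ 3 / n ^ 6 := by
    rw [le_div_iff₀ (by positivity)]
    exact norm_rowSum_sq_mul_le Z hn3 hZ j
  have hratio : (n.descFactorial 3 : ℝ) / n ^ 3 / D ≤ 1 / N ^ 3 := by
    have h := monotone_descFactorial_div_pow 3 hnN
    rw [div_le_div_iff₀ (by positivity) (by positivity)] at h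
    rw [div_div, div_le_div_iff₀ (by positivity) (by positivity), one_mul]
    linarith
  have hchoose : (n.descFactorial 3 : ℝ) = 6 * n.choose 3 := by
    exact_mod_cast Nat.descFactorial_eq_factorial_mul_choose n 3
  rw [Real.rpow_div_two_eq_sqrt _ hy, show (3 : ℝ) = (3 : ℕ) by norm_num, Real.rpow_natCast,
    ← pow_le_pow_iff_left₀ (by positivity) (by positivity) two_ne_zero, mul_pow, mul_pow,
    Real.sq_sqrt (by norm_num), pow_right_comm, Real.sq_sqrt hy]
  calc (2 / D) ^ 2 * ‖rowSum Z j‖ ^ 2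
      ≤ (2 / D) ^ 2 * (27 * n.choose 3 ^ 2 * (S * μ) ^ 3 / n ^ 6) := by gcongr
    _ = 3 * ((n.descFactorial 3 : ℝ) / n ^ 3 / D) ^ 2 * (S * μ) ^ 3 := by
        rw [hchoose]; field_simp; ring
    _ ≤ 3 * (1 / N ^ 3) ^ 2 * (S * μ) ^ 3 := by gcongr
    _ = 3 * ((N ^ 2 : ℝ)⁻¹ * S * μ) ^ 3 := by ring

end ThirdTerm

/-- For `|z_{j,k}| ≤ 1` and `3 ≤ n ≤ N`:
`|G_3(Z)| ≤ √3 · ∑_j ((1/N²) ∑_k |a_{j,k}|² · min{n/3, 1/(1−β)})^{3/2}`,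
where for `β = 1` the quantity `min{n/3, 1/(1−β)}` is interpreted as `n/3`. -/
theorem stmt18 (N n : ℕ) (hn3 : 3 ≤ n) (hnN : n ≤ N)
    (Z : Matrix (Fin N) (Fin n) ℂ) (hZ : ∀ j k, ‖Z j k‖ ≤ 1) :
    ‖GZ Z 3‖ ≤
      Real.sqrt 3 * ∑ j : Fin N,
        (((N : ℝ) ^ 2)⁻¹ * (∑ k : Fin n, ‖aEnt Z j k‖ ^ 2) *
            (if betaZ Z < 1 then min ((n : ℝ) / 3) (1 / (1 - betaZ Z)) else (n : ℝ) / 3)) ^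
          ((3 : ℝ) / 2) := by
  rw [GZ_three_eq Z hn3 (hn3.trans hnN), norm_mul, norm_div, Complex.norm_ofNat,
    Complex.norm_natCast, mul_sum]
  calc _ ≤ 2 / N.descFactorial 3 * ∑ j, ‖rowSum Z j‖ := by gcongr; exact norm_sum_le _ _
    _ ≤ _ := by
        rw [mul_sum]
        exact sum_le_sum fun j _ => two_div_descFactorial_mul_norm_rowSum_le Z hn3 hnN hZ j
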